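/- If G is a bipartite connected graph, f : V(G) → {1, 0, 0̂} a colouring, and G is 2-connected, then a minimum f-respecting simultaneous dominating set of G has size |f⁻¹(1)| + τ(G′), where G′ = (G − f⁻¹(1)) − E(G[f⁻¹(0)]) and τ denotes the minimum vertex cover number; moreover G′ is bipartite, so by König's theorem τ(G′) equals the maximum matching number of G′. -/

import Mathlib

open SimpleGraph

variable {V : Type*}

/-- Number of connected components of a graph. -/
noncomputable def numComponents (G : SimpleGraph V) : ℕ := Nat.card G.ConnectedComponent

/-- A vertex is a cut vertex if its removal increases the number of connected components. -/
def IsCutVertex (G : SimpleGraph V) (v : V) : Prop :=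
  numComponents G < numComponents (G.induce {u | u ≠ v})

/-- `T` is a spanning tree of `G`: a subgraph on all vertices of `G` that is a tree. -/
def IsSpanningTree (G T : SimpleGraph V) : Prop := T ≤ G ∧ T.IsTree

/-- `v` is dominated by `S` in the graph `T`. -/
def DominatedIn (T : SimpleGraph V) (S : Set V) (v : V) : Prop :=
  v ∈ S ∨ ∃ u ∈ S, T.Adj v u

/-- `v` is simultaneously dominated by `S`: dominated in every spanning tree of `G`. -/
def SimDominated (G : SimpleGraph V) (S : Set V) (v : V) : Prop :=
  ∀ T : SimpleGraph V, IsSpanningTree G T → DominatedIn T S v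

/-- `S` is a simultaneous dominating set of `G`. -/
def IsSDSet (G : SimpleGraph V) (S : Set V) : Prop := ∀ v, SimDominated G S v

/-- `C` is a vertex cover of `G`. -/
def IsVertexCover (G : SimpleGraph V) (C : Set V) : Prop :=
  ∀ ⦃u v : V⦄, G.Adj u v → u ∈ C ∨ v ∈ C

/-- A block of `G`: a maximal vertex set inducing a connected subgraph without cut vertices. -/
def IsBlock (G : SimpleGraph V) (B : Set V) : Prop :=
  B.Nonempty ∧ (G.induce B).Connected ∧ (∀ x, ¬ IsCutVertex (G.induce B) x) ∧
    ∀ B' : Set V, B ⊆ B' → (G.induce B').Connected →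
      (∀ x, ¬ IsCutVertex (G.induce B') x) → B' = B

/-- 2-connected: connected, at least 3 vertices, no cut vertex. -/
def TwoConnected (G : SimpleGraph V) [Fintype V] : Prop :=
  G.Connected ∧ 3 ≤ Fintype.card V ∧ ∀ v, ¬ IsCutVertex G v

/-- Colours 1, 0, 0̂. -/
inductive Col : Type
  | one | zero | zhat
deriving DecidableEq

/-- `S` is an `f`-respecting simultaneous dominating set of `G`. -/
def RespSDS (G : SimpleGraph V) (f : V → Col) (S : Set V) : Prop :=
  (∀ v, f v = Col.one → v ∈ S) ∧ ∀ v, f v = Col.zhat → SimDominated G S v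

/-- A minimum `f`-respecting simultaneous dominating set. -/
def MinRespSDS (G : SimpleGraph V) (f : V → Col) (S : Set V) : Prop :=
  RespSDS G f S ∧ ∀ S' : Set V, RespSDS G f S' → S.ncard ≤ S'.ncard

/-- The graph `(G − f⁻¹(1)) − E(G[f⁻¹(0)])`: delete all vertices of colour 1 (keeping them as
isolated vertices) and all edges between two vertices of colour 0. -/
def Gminus (G : SimpleGraph V) (f : V → Col) : SimpleGraph V where
  Adj u w := G.Adj u w ∧ f u ≠ Col.one ∧ f w ≠ Col.one ∧ ¬(f u = Col.zero ∧ f w = Col.zero)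
  symm := ⟨fun u w ⟨h, h1, h2, h3⟩ => ⟨h.symm, h2, h1, fun ⟨a, b⟩ => h3 ⟨b, a⟩⟩⟩
  loopless := ⟨fun u h => G.loopless.irrefl u h.1⟩

/-!
In a 2-connected graph, every edge `vu` lies in a spanning tree in which `v` is a leaf attached
to `u`: deleting the other edges at `v` leaves a connected graph, since `G - v` is connected.
So a vertex is dominated by `S` in every spanning tree iff it lies in `S` or its whole
neighbourhood does. An `f`-respecting
SD-set is therefore `f⁻¹(1)` together with a set meeting every edge of `G` that has an end of
colour `0̂` and no end of colour `1`, i.e. a vertex cover of `G′`.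

For König's theorem, let `C` be a minimum vertex cover of a bipartite graph. A set `s ⊆ C` lying
in one colour class is independent, so `(C \ s) ∪ (N(s) \ C)` is again a cover and
`|s| ≤ |N(s) \ C|`. Adding this over the two colour classes, whose outside neighbourhoods lie in
opposite classes, gives Hall's condition for the edges leaving `C`, hence a matching saturating
`C` with one edge per vertex of `C`.
-/

lemma connected_iff_numComponents_eq_one (G : SimpleGraph V) :
    G.Connected ↔ numComponents G = 1 := by
  rw [numComponents, Nat.card_eq_one_iff_unique, connected_iff]
  refine ⟨fun ⟨hpre, ⟨v⟩⟩ => ⟨hpre.subsingleton_connectedComponent, ⟨G.connectedComponentMk v⟩⟩,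
    fun ⟨_, ⟨c⟩⟩ => ⟨fun u w => ConnectedComponent.eq.mp (Subsingleton.elim _ _), ⟨c.out⟩⟩⟩

namespace TwoConnected

variable [Fintype V] {G : SimpleGraph V}

lemma connected_induce_ne (hG : TwoConnected G) (v : V) :
    (G.induce {u | u ≠ v}).Connected := by
  obtain ⟨hconn, hcard, hcut⟩ := hG
  obtain ⟨w, hw⟩ := Fintype.exists_ne_of_one_lt_card (by omega) v
  have : Nonempty {u | u ≠ v} := ⟨⟨w, hw⟩⟩
  have hpos : 0 < numComponents (G.induce {u | u ≠ v}) := Nat.card_pos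
  have hle := hcut v
  rw [IsCutVertex, (connected_iff_numComponents_eq_one G).mp hconn, not_lt] at hle
  rw [connected_iff_numComponents_eq_one]
  omega

lemma exists_isSpanningTree_adj_eq (hG : TwoConnected G) {v u : V} (hvu : G.Adj v u) :
    ∃ T, IsSpanningTree G T ∧ ∀ w, T.Adj v w → w = u := by
  let K : SimpleGraph V :=
    { Adj a b := G.Adj a b ∧ (a = v → b = u) ∧ (b = v → a = u)
      symm := ⟨fun _ _ ⟨h, h₁, h₂⟩ => ⟨h.symm, h₂, h₁⟩⟩
      loopless := ⟨fun a h => G.loopless.irrefl a h.1⟩ }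
  have huv : K.Adj u v := ⟨hvu.symm, fun h => h.symm, fun _ => rfl⟩
  let φ : G.induce {w | w ≠ v} →g K :=
    ⟨Subtype.val, fun {a b} h => ⟨h, fun h' => absurd h' a.2, fun h' => absurd h' b.2⟩⟩
  have hreach (x : V) : K.Reachable v x := by
    by_cases hx : x = v
    · exact hx ▸ Reachable.refl x
    exact huv.reachable.symm.trans
      (((hG.connected_induce_ne v).preconnected ⟨u, hvu.ne'⟩ ⟨x, hx⟩).map φ)
  obtain ⟨T, hTK, hT⟩ :=
    ((connected_iff_exists_forall_reachable K).mpr ⟨v, hreach⟩).exists_isTree_le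
  exact ⟨T, ⟨hTK.trans fun _ _ h => h.1, hT⟩, fun w hw => (hTK hw).2.1 rfl⟩

lemma simDominated_iff (hG : TwoConnected G) {S : Set V} {v : V} :
    SimDominated G S v ↔ v ∈ S ∨ ∀ w, G.Adj v w → w ∈ S := by
  refine ⟨fun h => or_iff_not_imp_left.mpr fun hv w hvw => ?_, ?_⟩
  · obtain ⟨T, hT, hleaf⟩ := hG.exists_isSpanningTree_adj_eq hvw
    obtain hv' | ⟨x, hx, hvx⟩ := h T hT
    · exact absurd hv' hv
    · exact hleaf x hvx ▸ hx
  · rintro (hv | hN) T ⟨hTG, hT⟩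
    · exact Or.inl hv
    have : Nontrivial V := Fintype.one_lt_card_iff_nontrivial.mp (by have := hG.2.1; omega)
    obtain ⟨w, hvw⟩ := hT.connected.preconnected.exists_adj_of_nontrivial v
    exact Or.inr ⟨w, hN w (hTG hvw), hvw⟩

end TwoConnected

section Reduction

variable [Fintype V] {G : SimpleGraph V} {f : V → Col}

lemma RespSDS.of_isVertexCover (hG : TwoConnected G) {C : Set V}
    (hC : _root_.IsVertexCover (Gminus G f) C) : RespSDS G f (f ⁻¹' {Col.one} ∪ C) := by
  refine ⟨fun v hv => Or.inl hv, fun v hv => hG.simDominated_iff.mpr ?_⟩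
  by_cases hvC : v ∈ C
  · exact Or.inl (Or.inr hvC)
  refine Or.inr fun w hvw => ?_
  by_cases hw : f w = Col.one
  · exact Or.inl hw
  have hvw' : (Gminus G f).Adj v w := ⟨hvw, by simp [hv], hw, by simp [hv]⟩
  exact Or.inr ((hC hvw').resolve_left hvC)

lemma RespSDS.isVertexCover_diff (hG : TwoConnected G) {S : Set V} (hS : RespSDS G f S) :
    _root_.IsVertexCover (Gminus G f) (S \ f ⁻¹' {Col.one}) := by
  have hzhat {x y : V} (hxy : G.Adj x y) (hx : f x = Col.zhat) (hy : f y ≠ Col.one) :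
      x ∈ S \ f ⁻¹' {Col.one} ∨ y ∈ S \ f ⁻¹' {Col.one} := by
    rcases hG.simDominated_iff.mp (hS.2 x hx) with h | h
    · exact Or.inl ⟨h, by simp [hx]⟩
    · exact Or.inr ⟨h y hxy, hy⟩
  rintro a b ⟨hab, ha, hb, hzero⟩
  have : f a = Col.zhat ∨ f b = Col.zhat := by
    cases ha' : f a <;> cases hb' : f b <;> simp_all
  rcases this with h | h
  · exact hzhat hab h hb
  · exact (hzhat hab.symm h ha).symm

lemma sInf_ncard_respSDS (hG : TwoConnected G) :
    sInf {n : ℕ | ∃ S : Set V, RespSDS G f S ∧ S.ncard = n} =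
      (f ⁻¹' {Col.one}).ncard +
        sInf {n : ℕ | ∃ C : Set V, _root_.IsVertexCover (Gminus G f) C ∧ C.ncard = n} := by
  apply le_antisymm
  · obtain ⟨C, hC, hCcard⟩ := Nat.sInf_mem
      (s := {n | ∃ C : Set V, _root_.IsVertexCover (Gminus G f) C ∧ C.ncard = n})
      ⟨_, Set.univ, fun u _ _ => Or.inl (Set.mem_univ u), rfl⟩
    calc _ ≤ (f ⁻¹' {Col.one} ∪ C).ncard :=
          Nat.sInf_le (by exact ⟨_, RespSDS.of_isVertexCover hG hC, rfl⟩)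
      _ ≤ _ := hCcard ▸ Set.ncard_union_le _ _
  · obtain ⟨S, hS, hScard⟩ := Nat.sInf_mem (s := {n | ∃ S, RespSDS G f S ∧ S.ncard = n})
      ⟨_, Set.univ, ⟨fun v _ => Set.mem_univ v, fun v _ _ _ => Or.inl (Set.mem_univ v)⟩, rfl⟩
    calc _ ≤ (f ⁻¹' {Col.one}).ncard + (S \ f ⁻¹' {Col.one}).ncard :=
          Nat.add_le_add_left (Nat.sInf_le (by exact ⟨_, hS.isVertexCover_diff hG, rfl⟩)) _
      _ = _ := by
        rw [add_comm, Set.ncard_sdiff_add_ncard_of_subset (show f ⁻¹' {Col.one} ⊆ S from hS.1),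
          hScard]

end Reduction

namespace SimpleGraph.Subgraph.IsMatching

variable {H : SimpleGraph V} {M : H.Subgraph}

lemma eq_toEdge_of_mem (hM : M.IsMatching) {e : Sym2 V} (he : e ∈ M.edgeSet) {v : V}
    (hv : v ∈ e) : e = hM.toEdge ⟨v, M.mem_verts_of_mem_edge he hv⟩ := by
  induction e with
  | h a b =>
    rcases Sym2.mem_iff.mp hv with rfl | rfl
    · rw [hM.toEdge_eq_of_adj he]
    · rw [hM.toEdge_eq_of_adj (M.adj_symm he), Sym2.eq_swap]

lemma card_edgeSet_le_ncard_of_isVertexCover [Finite V] (hM : M.IsMatching) {C : Set V}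
    (hC : _root_.IsVertexCover H C) : Nat.card M.edgeSet ≤ C.ncard := by
  have hmeet (e : M.edgeSet) : ∃ v ∈ C, v ∈ (e : Sym2 V) := by
    obtain ⟨e, he⟩ := e
    induction e with
    | h a b =>
      rcases hC (M.adj_sub he) with h | h
      · exact ⟨a, h, Sym2.mem_mk_left a b⟩
      · exact ⟨b, h, Sym2.mem_mk_right a b⟩
  choose g hgC hge using hmeet
  have hinj : Function.Injective fun e => (⟨g e, hgC e⟩ : C) := fun e₁ e₂ h => by
    have h' : g e₁ = g e₂ := congrArg Subtype.val h
    refine Subtype.ext ((hM.eq_toEdge_of_mem e₁.2 (hge e₁)).trans ?_)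
    rw [hM.eq_toEdge_of_mem e₂.2 (hge e₂)]
    simp_rw [h']
  exact (Nat.card_le_card_of_injective _ hinj).trans (Nat.card_coe_set_eq C).le

lemma ncard_le_card_edgeSet [Finite V] (hM : M.IsMatching) {C : Set V} (hCM : C ⊆ M.verts)
    (hC : ∀ ⦃a b⦄, a ∈ C → b ∈ C → ¬M.Adj a b) : C.ncard ≤ Nat.card M.edgeSet := by
  let toEdge (v : C) : M.edgeSet := hM.toEdge ⟨v, hCM v.2⟩
  have hinj : Function.Injective toEdge := fun v w h => by
    obtain ⟨v', hvv'⟩ := hM (hCM v.2)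
    have hw : (w : V) ∈ (toEdge v : Sym2 V) := h ▸ hM.mem_coe_toEdge (hCM w.2)
    simp only [toEdge, hM.toEdge_eq_of_adj hvv'.1] at hw
    rcases Sym2.mem_iff.mp hw with h' | rfl
    · exact Subtype.ext h'.symm
    · exact absurd hvv'.1 (hC v.2 w.2)
  exact (Nat.card_coe_set_eq C).symm.le.trans (Nat.card_le_card_of_injective _ hinj)

end SimpleGraph.Subgraph.IsMatching

section Konig

variable [Finite V] {H : SimpleGraph V} {C : Set V}

lemma ncard_le_ncard_neighbors_diff_of_isIndepSet (hC : _root_.IsVertexCover H C)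
    (hmin : ∀ C', _root_.IsVertexCover H C' → C.ncard ≤ C'.ncard) {s : Set V} (hsC : s ⊆ C)
    (hs : H.IsIndepSet s) : s.ncard ≤ {w | w ∉ C ∧ ∃ x ∈ s, H.Adj x w}.ncard := by
  set N := {w | w ∉ C ∧ ∃ x ∈ s, H.Adj x w}
  have hcover : _root_.IsVertexCover H ((C \ s) ∪ N) := by
    have key {a b : V} (hab : H.Adj a b) (ha : a ∈ C) : a ∈ (C \ s) ∪ N ∨ b ∈ (C \ s) ∪ N := by
      by_cases has : a ∈ s
      · by_cases hbC : b ∈ C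
        · exact Or.inr (Or.inl ⟨hbC, fun hbs => hs has hbs hab.ne hab⟩)
        · exact Or.inr (Or.inr ⟨hbC, a, has, hab⟩)
      · exact Or.inl (Or.inl ⟨ha, has⟩)
    intro a b hab
    rcases hC hab with ha | hb
    · exact key hab ha
    · exact (key hab.symm hb).symm
  have := hmin _ hcover
  have := Set.ncard_union_le (C \ s) N
  have := Set.ncard_sdiff hsC
  have := Set.ncard_le_ncard hsC
  omega

lemma ncard_le_ncard_neighbors_diff (hH : H.Colorable 2) (hC : _root_.IsVertexCover H C)
    (hmin : ∀ C', _root_.IsVertexCover H C' → C.ncard ≤ C'.ncard) {s : Set V} (hsC : s ⊆ C) :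
    s.ncard ≤ {w | w ∉ C ∧ ∃ x ∈ s, H.Adj x w}.ncard := by
  obtain ⟨c⟩ := hH
  let N (t : Set V) := {w | w ∉ C ∧ ∃ x ∈ t, H.Adj x w}
  have hN {t : Set V} (ht : t ⊆ s) : N t ⊆ N s := fun w ⟨hw, x, hx, hxw⟩ => ⟨hw, x, ht hx, hxw⟩
  have hclass (i : Fin 2) : {x ∈ s | c x = i}.ncard ≤ (N {x ∈ s | c x = i}).ncard :=
    ncard_le_ncard_neighbors_diff_of_isIndepSet hC hmin (fun x hx => hsC hx.1)
      fun a ha b hb _ hab => c.valid hab (ha.2.trans hb.2.symm)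
  have hsplit : s = {x ∈ s | c x = 0} ∪ {x ∈ s | c x = 1} := by
    ext x
    have : c x = 0 ∨ c x = 1 := by omega
    simp only [Set.mem_union, Set.mem_ofPred_eq]
    tauto
  have hdisj : Disjoint (N {x ∈ s | c x = 0}) (N {x ∈ s | c x = 1}) :=
    Set.disjoint_left.mpr fun w ⟨_, x, hx, hxw⟩ ⟨_, y, hy, hyw⟩ => by
      have := c.valid hxw; have := c.valid hyw; simp only [hx.2, hy.2] at *; omega
  calc s.ncard ≤ {x ∈ s | c x = 0}.ncard + {x ∈ s | c x = 1}.ncard :=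
        (congrArg Set.ncard hsplit).trans_le (Set.ncard_union_le _ _)
    _ ≤ (N {x ∈ s | c x = 0}).ncard + (N {x ∈ s | c x = 1}).ncard :=
        add_le_add (hclass 0) (hclass 1)
    _ = (N {x ∈ s | c x = 0} ∪ N {x ∈ s | c x = 1}).ncard := (Set.ncard_union_eq hdisj).symm
    _ ≤ (N s).ncard :=
        Set.ncard_le_ncard (Set.union_subset (hN fun _ h => h.1) (hN fun _ h => h.1))

lemma exists_isMatching_ncard_le_card_edgeSet (hH : H.Colorable 2)
    (hC : _root_.IsVertexCover H C)
    (hmin : ∀ C', _root_.IsVertexCover H C' → C.ncard ≤ C'.ncard) :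
    ∃ M : H.Subgraph, M.IsMatching ∧ C.ncard ≤ Nat.card M.edgeSet := by
  classical
  have := Fintype.ofFinite V
  let H' := H ⊓ fromRel fun a b => a ∈ C ∧ b ∉ C
  have hH' : H'.IsBipartiteWith C Cᶜ := by
    refine ⟨disjoint_compl_right, fun a b ⟨_, _, h⟩ => ?_⟩
    simp only [Set.mem_compl_iff]
    tauto
  obtain ⟨M, hCM, hM⟩ := exists_isMatching_of_forall_ncard_le hH' fun s hsC =>
    (ncard_le_ncard_neighbors_diff hH hC hmin hsC).trans <| Set.ncard_le_ncard
      fun w ⟨hw, x, hx, hxw⟩ => Set.mem_biUnion hx ⟨hxw, hxw.ne, Or.inl ⟨hsC hx, hw⟩⟩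
  refine ⟨M.map (Hom.ofLE inf_le_left), hM.map_ofLE _, ?_⟩
  rw [Subgraph.edgeSet_map, Hom.coe_ofLE, Sym2.map_id, Set.image_id]
  exact hM.ncard_le_card_edgeSet hCM fun a b ha hb hab => by
    obtain ⟨-, -, h⟩ := M.adj_sub hab
    tauto

theorem sInf_ncard_isVertexCover_eq_sSup_card_isMatching (hH : H.Colorable 2) :
    sInf {n : ℕ | ∃ C : Set V, _root_.IsVertexCover H C ∧ C.ncard = n} =
      sSup {n : ℕ | ∃ M : H.Subgraph, M.IsMatching ∧ Nat.card M.edgeSet = n} := by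
  obtain ⟨C, hC, hCcard⟩ :=
    Nat.sInf_mem (s := {n | ∃ C, _root_.IsVertexCover H C ∧ C.ncard = n})
      ⟨_, Set.univ, fun u _ _ => Or.inl (Set.mem_univ u), rfl⟩
  have hmin (C' : Set V) (hC' : _root_.IsVertexCover H C') : C.ncard ≤ C'.ncard :=
    hCcard ▸ Nat.sInf_le ⟨C', hC', rfl⟩
  have hbound : ∀ n ∈ {n | ∃ M : H.Subgraph, M.IsMatching ∧ Nat.card M.edgeSet = n},
      n ≤ C.ncard := fun _ ⟨M, hM, hn⟩ => hn ▸ hM.card_edgeSet_le_ncard_of_isVertexCover hC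
  obtain ⟨M, hM, hCM⟩ := exists_isMatching_ncard_le_card_edgeSet hH hC hmin
  rw [← hCcard]
  exact le_antisymm (le_csSup_of_le ⟨_, hbound⟩ ⟨M, hM, rfl⟩ hCM)
    (csSup_le ⟨_, M, hM, rfl⟩ hbound)

end Konig

theorem stmt19_general [Fintype V] (G : SimpleGraph V) (hbip : G.Colorable 2)
    (h2 : TwoConnected G) (f : V → Col) :
    sInf {n : ℕ | ∃ S : Set V, RespSDS G f S ∧ S.ncard = n} =
      (f ⁻¹' {Col.one}).ncard +
        sInf {n : ℕ | ∃ C : Set V, _root_.IsVertexCover (Gminus G f) C ∧ C.ncard = n} ∧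
    (Gminus G f).Colorable 2 ∧
    sInf {n : ℕ | ∃ C : Set V, _root_.IsVertexCover (Gminus G f) C ∧ C.ncard = n} =
      sSup {n : ℕ | ∃ M : (Gminus G f).Subgraph, M.IsMatching ∧ Nat.card M.edgeSet = n} := by
  have hbip' : (Gminus G f).Colorable 2 := hbip.mono_left (fun _ _ h => h.1 : Gminus G f ≤ G)
  exact ⟨sInf_ncard_respSDS h2, hbip', sInf_ncard_isVertexCover_eq_sSup_card_isMatching hbip'⟩

/-- In a bipartite connected 2-connected graph `G` with colouring `f`, the
minimum size of an `f`-respecting SD-set is `|f⁻¹(1)| + τ(G′)` with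
`G′ = (G − f⁻¹(1)) − E(G[f⁻¹(0)])`; moreover `G′` is bipartite, and by König's theorem
`τ(G′)` equals the maximum matching number of `G′`. -/
theorem stmt19 [Fintype V] (G : SimpleGraph V) (hbip : G.Colorable 2) (hconn : G.Connected)
    (h2 : TwoConnected G) (f : V → Col) :
    sInf {n : ℕ | ∃ S : Set V, RespSDS G f S ∧ S.ncard = n} =
      (f ⁻¹' {Col.one}).ncard +
        sInf {n : ℕ | ∃ C : Set V, _root_.IsVertexCover (Gminus G f) C ∧ C.ncard = n} ∧
    (Gminus G f).Colorable 2 ∧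
    sInf {n : ℕ | ∃ C : Set V, _root_.IsVertexCover (Gminus G f) C ∧ C.ncard = n} =
      sSup {n : ℕ | ∃ M : (Gminus G f).Subgraph, M.IsMatching ∧ Nat.card M.edgeSet = n} :=
  stmt19_general G hbip h2 f
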